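/- arXiv:1707.01290 — 3 statements merged into one kernel-verified Lean document; each statement's English description precedes it below -/
import Mathlib

section
/- Let T>0, G>0, m>0 be constants and F a nonnegative continuous function on [0,T). Define ν₀ = 1/(4m(2mTG)^{1/m} ∫₀^T F(t)dt). Then for all 0<ν≤ν₀, every nonnegative C¹ function y on [0,T) with y(0)=0 and y'(t) ≤ νF(t) + G·y(t)^{1+m} satisfies y(t) ≤ min{ (4^{1/m}−1)/(2mTG)^{1/m}, 4m(4^{1/m}−1)ν∫₀^T F(t)dt } for all t∈[0,T). -/
/-!
With `δ = 4mν∫₀ᵀF`, the function `H(t) = (δ + y t)^(-m) + mνδ^(-m-1) ∫₀ᵗ F + mGt` is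
nondecreasing: the differential inequality and `y ≥ 0` make the decrease of `(δ + y)^(-m)`
at most `mνδ^(-m-1) F + mG`. Hence `(δ + y t)^(-m) ≥ δ^(-m) - mνδ^(-m-1)∫₀ᵀF - mGT`, and the
smallness of `ν` makes the two subtracted terms at most `δ^(-m)/4` and `δ^(-m)/2`. So
`(δ + y t)^(-m) ≥ δ^(-m)/4`, i.e. `y t ≤ (4^(1/m) - 1) δ`, and `δ ≤ (2mTG)^(-1/m)`.
-/

open MeasureTheory Set intervalIntegral

theorem neg_le_mul_rpow_neg_sub_one_of_le_add_mul_rpow {y y' f δ m G : ℝ} (hm : 0 < m)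
    (hG : 0 ≤ G) (hδ : 0 < δ) (hy : 0 ≤ y) (hf : 0 ≤ f) (h : y' ≤ f + G * y ^ (1 + m)) :
    -(m * δ ^ (-m - 1) * f + m * G) ≤ y' * (-m) * (δ + y) ^ (-m - 1) := by
  have hz : 0 < δ + y := by linarith
  have hcancel : (δ + y) ^ (1 + m) * (δ + y) ^ (-m - 1) = 1 := by
    rw [← Real.rpow_add hz, show 1 + m + (-m - 1) = (0 : ℝ) by ring, Real.rpow_zero]
  have hy' : y' ≤ f + G * (δ + y) ^ (1 + m) := by
    have : y ^ (1 + m) ≤ (δ + y) ^ (1 + m) := by gcongr; linarith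
    nlinarith
  have hmono : (δ + y) ^ (-m - 1) ≤ δ ^ (-m - 1) :=
    Real.rpow_le_rpow_of_nonpos hδ (by linarith) (by linarith)
  calc -(m * δ ^ (-m - 1) * f + m * G)
      ≤ -(m * (δ + y) ^ (-m - 1) * f + m * G) := by gcongr
    _ = -(m * (δ + y) ^ (-m - 1) * (f + G * (δ + y) ^ (1 + m))) := by
        linear_combination (m * G) * hcancel
    _ ≤ y' * (-m) * (δ + y) ^ (-m - 1) := by
        have := mul_le_mul_of_nonneg_left hy' (by positivity : 0 ≤ m * (δ + y) ^ (-m - 1))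
        linarith

theorem sub_le_rpow_neg_add_of_deriv_le {y y' f : ℝ → ℝ} {a b δ m G : ℝ} (hab : a ≤ b)
    (hm : 0 < m) (hG : 0 ≤ G) (hδ : 0 < δ) (hy : ContinuousOn y (Icc a b))
    (hy' : ∀ x ∈ Ioo a b, HasDerivWithinAt y (y' x) (Ioi x) x)
    (hy0 : ∀ x ∈ Icc a b, 0 ≤ y x) (hf : IntervalIntegrable f volume a b)
    (hf0 : ∀ x ∈ Ioo a b, 0 ≤ f x) (hineq : ∀ x ∈ Ioo a b, y' x ≤ f x + G * y x ^ (1 + m)) :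
    (δ + y a) ^ (-m) - m * δ ^ (-m - 1) * (∫ x in a..b, f x) - m * G * (b - a) ≤
      (δ + y b) ^ (-m) := by
  have hpos : ∀ x ∈ Icc a b, δ + y x ≠ 0 := fun x hx => by linarith [hy0 x hx]
  have key := integral_le_sub_of_hasDeriv_right_of_le hab
    (g := fun x => (δ + y x) ^ (-m)) (φ := fun x => -(m * δ ^ (-m - 1) * f x + m * G))
    ((continuousOn_const.add hy).rpow_const fun x hx => Or.inl (hpos x hx))
    (fun x hx => ((hy' x hx).const_add δ).rpow_const (Or.inl (hpos x (Ioo_subset_Icc_self hx))))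
    ((((intervalIntegrable_iff_integrableOn_Icc_of_le hab).1 hf).const_mul _).add
      (integrableOn_const (by simp))).neg
    (fun x hx => neg_le_mul_rpow_neg_sub_one_of_le_add_mul_rpow hm hG hδ
      (hy0 x (Ioo_subset_Icc_self hx)) (hf0 x hx) (hineq x hx))
  rw [intervalIntegral.integral_neg, intervalIntegral.integral_add (hf.const_mul _)
    intervalIntegrable_const, intervalIntegral.integral_const_mul,
    intervalIntegral.integral_const, smul_eq_mul] at key
  linarith

theorem sub_le_rpow_neg_add_of_deriv_le_Ico {y y' F : ℝ → ℝ} {T t δ m G ν : ℝ} (hm : 0 < m)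
    (hG : 0 ≤ G) (hν : 0 ≤ ν) (hδ : 0 < δ) (hF : IntervalIntegrable F volume 0 T)
    (hF0 : ∀ s ∈ Ico 0 T, 0 ≤ F s) (hy : ∀ s ∈ Ico 0 T, 0 ≤ y s) (hy0 : y 0 = 0)
    (hy' : ∀ s ∈ Ico 0 T, HasDerivWithinAt y (y' s) (Ico 0 T) s)
    (hineq : ∀ s ∈ Ico 0 T, y' s ≤ ν * F s + G * y s ^ (1 + m)) (ht : t ∈ Ico 0 T) :
    δ ^ (-m) - m * δ ^ (-m - 1) * (ν * ∫ s in (0:ℝ)..T, F s) - m * G * T ≤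
      (δ + y t) ^ (-m) := by
  have hsub : Icc 0 t ⊆ Ico 0 T := Icc_subset_Ico_right ht.2
  have hIoo : Ioo 0 t ⊆ Ico 0 T := Ioo_subset_Icc_self.trans hsub
  have henergy := sub_le_rpow_neg_add_of_deriv_le (f := fun s => ν * F s) (δ := δ) ht.1 hm hG
    hδ (fun s hs => (hy' s (hsub hs)).continuousWithinAt.mono hsub)
    (fun s hs => ((hy' s (hIoo hs)).hasDerivAt
      (Ico_mem_nhds hs.1 (hs.2.trans ht.2))).hasDerivWithinAt)
    (fun s hs => hy s (hsub hs))
    ((hF.mono_set (uIcc_subset_uIcc_left (mem_uIcc_of_le ht.1 ht.2.le))).const_mul ν)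
    (fun s hs => mul_nonneg hν (hF0 s (hIoo hs))) (fun s hs => hineq s (hIoo hs))
  rw [hy0, add_zero, intervalIntegral.integral_const_mul, sub_zero] at henergy
  have hFt : ∫ s in (0:ℝ)..t, F s ≤ ∫ s in (0:ℝ)..T, F s := by
    refine intervalIntegral.integral_mono_interval le_rfl ht.1 ht.2.le ?_ hF
    rw [← Measure.restrict_congr_set Ioo_ae_eq_Ioc]
    filter_upwards [ae_restrict_mem measurableSet_Ioo] with s hs
    exact hF0 s (Ioo_subset_Ico_self hs)
  have : m * δ ^ (-m - 1) * (ν * ∫ s in (0:ℝ)..t, F s) ≤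
      m * δ ^ (-m - 1) * (ν * ∫ s in (0:ℝ)..T, F s) := by gcongr
  have : m * G * t ≤ m * G * T := by gcongr; exact ht.2.le
  linarith

theorem le_rpow_inv_mul_of_rpow_neg_le {δ z c m : ℝ} (hm : 0 < m) (hc : 0 < c) (hδ : 0 < δ)
    (hz : 0 < z) (h : δ ^ (-m) ≤ c * z ^ (-m)) : z ≤ c ^ (1 / m) * δ := by
  have hc' : (c ^ (1 / m) * δ) ^ (-m) = c⁻¹ * δ ^ (-m) := by
    rw [Real.mul_rpow (by positivity) hδ.le, ← Real.rpow_mul hc.le,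
      show 1 / m * -m = (-1 : ℝ) by field_simp, Real.rpow_neg_one]
  have : (c ^ (1 / m) * δ) ^ (-m) ≤ z ^ (-m) := by
    rw [hc', inv_mul_le_iff₀ hc]; exact h
  exact (Real.rpow_le_rpow_iff_of_neg (by positivity) hz (by linarith)).1 this

theorem mul_rpow_le_one_of_mul_rpow_inv_le_one {δ x m : ℝ} (hm : 0 < m) (hδ : 0 ≤ δ)
    (hx : 0 ≤ x) (h : δ * x ^ (1 / m) ≤ 1) : x * δ ^ m ≤ 1 := by
  have := Real.rpow_le_one (by positivity) h hm.le
  rwa [Real.mul_rpow hδ (by positivity), ← Real.rpow_mul hx, one_div_mul_cancel hm.ne',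
    Real.rpow_one, mul_comm] at this

theorem statement0_general (T G m ν : ℝ) (hT : 0 < T) (hG : 0 < G) (hm : 0 < m)
    (F : ℝ → ℝ)
    (hFnonneg : ∀ t ∈ Ico 0 T, 0 ≤ F t)
    (hFpos : 0 < ∫ t in (0:ℝ)..T, F t)
    (hν : 0 < ν)
    (hνle : ν ≤ 1 / (4 * m * (2 * m * T * G) ^ (1/m) * ∫ t in (0:ℝ)..T, F t))
    (y y' : ℝ → ℝ)
    (hynonneg : ∀ t ∈ Ico 0 T, 0 ≤ y t) (hy0 : y 0 = 0)
    (hyderiv : ∀ t ∈ Ico 0 T, HasDerivWithinAt y (y' t) (Ico 0 T) t)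
    (hineq : ∀ t ∈ Ico 0 T, y' t ≤ ν * F t + G * y t ^ (1 + m)) :
    ∀ t ∈ Ico 0 T,
      y t ≤ min (((4:ℝ) ^ (1/m) - 1) / (2 * m * T * G) ^ (1/m))
        (4 * m * ((4:ℝ) ^ (1/m) - 1) * ν * ∫ t in (0:ℝ)..T, F t) := by
  intro t ht
  set A := ∫ t in (0:ℝ)..T, F t
  set K := (2 * m * T * G) ^ (1 / m)
  set δ := 4 * m * ν * A with hδ
  have hδpos : 0 < δ := by positivity
  have hKpos : 0 < K := by positivity
  have hδK : δ * K ≤ 1 := by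
    rw [le_div_iff₀ (by positivity)] at hνle
    linarith
  have henergy := sub_le_rpow_neg_add_of_deriv_le_Ico hm hG.le hν.le hδpos
    (intervalIntegrable_of_integral_ne_zero hFpos.ne') hFnonneg hynonneg hy0 hyderiv hineq ht
  have hquarter : m * δ ^ (-m - 1) * (ν * A) = δ ^ (-m) / 4 := by
    rw [Real.rpow_sub_one hδpos.ne', hδ]
    field_simp
  have hhalf : m * G * T ≤ δ ^ (-m) / 2 := by
    have := mul_rpow_le_one_of_mul_rpow_inv_le_one hm hδpos.le (by positivity) hδK
    rw [Real.rpow_neg hδpos.le, le_div_iff₀ two_pos, ← one_div, le_div_iff₀ (by positivity)]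
    linarith
  have hyt : y t ≤ ((4:ℝ) ^ (1 / m) - 1) * δ := by
    have := le_rpow_inv_mul_of_rpow_neg_le hm four_pos hδpos
      (by linarith [hynonneg t ht] : 0 < δ + y t) (by linarith)
    linarith
  refine le_min ?_ (by linarith)
  have h4 : (1:ℝ) ≤ 4 ^ (1 / m) := Real.one_le_rpow (by norm_num) (by positivity)
  rw [le_div_iff₀ hKpos]
  calc y t * K ≤ ((4:ℝ) ^ (1 / m) - 1) * δ * K := by gcongr
    _ = ((4:ℝ) ^ (1 / m) - 1) * (δ * K) := by ring
    _ ≤ (4:ℝ) ^ (1 / m) - 1 := mul_le_of_le_one_right (by linarith) hδK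

/-- ODE comparison lemma (Proposition 2.6): if `y' ≤ ν F + G y^{1+m}` with `y(0)=0`,
`0 < ν ≤ ν₀ = 1/(4m(2mTG)^{1/m} ∫₀^T F)`, then `y` is bounded by the stated minimum. -/
theorem statement0 (T G m ν : ℝ) (hT : 0 < T) (hG : 0 < G) (hm : 0 < m)
    (F : ℝ → ℝ) (hFcont : ContinuousOn F (Ico 0 T))
    (hFnonneg : ∀ t ∈ Ico 0 T, 0 ≤ F t)
    (hFpos : 0 < ∫ t in (0:ℝ)..T, F t)
    (hν : 0 < ν)
    (hνle : ν ≤ 1 / (4 * m * (2 * m * T * G) ^ (1/m) * ∫ t in (0:ℝ)..T, F t))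
    (y y' : ℝ → ℝ)
    (hynonneg : ∀ t ∈ Ico 0 T, 0 ≤ y t) (hy0 : y 0 = 0)
    (hyderiv : ∀ t ∈ Ico 0 T, HasDerivWithinAt y (y' t) (Ico 0 T) t)
    (hineq : ∀ t ∈ Ico 0 T, y' t ≤ ν * F t + G * y t ^ (1 + m)) :
    ∀ t ∈ Ico 0 T,
      y t ≤ min (((4:ℝ) ^ (1/m) - 1) / (2 * m * T * G) ^ (1/m))
        (4 * m * ((4:ℝ) ^ (1/m) - 1) * ν * ∫ t in (0:ℝ)..T, F t) :=
  statement0_general T G m ν hT hG hm F hFnonneg hFpos hν hνle y y' hynonneg hy0 hyderiv hineq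
end

section
/- Let n ≥ 1, 0 < β < n/2, and define T₂f(x) = ∫_{ℝⁿ} K₂(x−y) f(y) dy with K₂(x) = (x/|x|^{n+1-β})(1 − χ(β|x|)), where χ is a smooth cutoff equal to 1 on [−1,1] and 0 outside [−2,2]. Then there is a constant C = C(n), independent of β, such that ‖T₂f‖_{L²(ℝⁿ)} ≤ C · β^{n/2}/√(n−2β) · ‖f‖_{L¹(ℝⁿ)} for all f ∈ L¹(ℝⁿ). -/
set_option maxHeartbeats 1000000

open MeasureTheory
open scoped ENNReal

noncomputable section

/-- The truncated kernel `K₂(x) = (x/|x|^{n+1-β})(1 − χ(β|x|))`. -/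
def K2 (n : ℕ) (χ : ℝ → ℝ) (β : ℝ) (x : EuclideanSpace ℝ (Fin n)) :
    EuclideanSpace ℝ (Fin n) :=
  ((1 - χ (β * ‖x‖)) * ‖x‖ ^ (-((n : ℝ) + 1 - β))) • x

/-- The operator `T₂f(x) = ∫ K₂(x−y) f(y) dy`. -/
def T2 (n : ℕ) (χ : ℝ → ℝ) (β : ℝ) (f : EuclideanSpace ℝ (Fin n) → ℝ)
    (x : EuclideanSpace ℝ (Fin n)) : EuclideanSpace ℝ (Fin n) :=
  ∫ y, f y • K2 n χ β (x - y)

section Aux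

open Metric Set intervalIntegral

variable {n : ℕ}

local notation "E" => EuclideanSpace ℝ (Fin n)

lemma young_conv {K : E → E} (hK : Measurable K) {f : E → ℝ} (hf : Measurable f) :
    eLpNorm (fun x => ∫ y, f y • K (x - y)) 2 volume ≤
      eLpNorm f 1 volume * eLpNorm K 2 volume := by
  set F : E → ℝ≥0∞ := fun y => (‖f y‖₊ : ℝ≥0∞) with hFdef
  set G : E → ℝ≥0∞ := fun x => (‖K x‖₊ : ℝ≥0∞) with hGdef
  have hF : Measurable F := hf.nnnorm.coe_nnreal_ennreal
  have hG : Measurable G := hK.nnnorm.coe_nnreal_ennreal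
  set A := ∫⁻ x, G x ^ (2:ℝ) with hA
  set I1 := ∫⁻ y, F y with hI1
  have sqe : ∀ a : ℝ≥0∞, a ^ (2:ℝ) = a * a := fun a => by
    rw [show (2:ℝ) = ((2:ℕ):ℝ) by norm_num, ENNReal.rpow_natCast, pow_two]
  -- pointwise bound
  have hpt : ∀ x, (‖∫ y, f y • K (x - y)‖₊ : ℝ≥0∞) ≤ ∫⁻ y, F y * G (x - y) := by
    intro x
    refine (enorm_integral_le_lintegral_enorm _).trans_eq ?_
    congr 1
    funext y
    exact enorm_smul _ _
  -- Cauchy-Schwarz + translation invariance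
  have htrans : ∀ y : E, ∫⁻ x, G (x - y) ^ (2:ℝ) = A :=
    fun y => lintegral_sub_right_eq_self (fun x => G x ^ (2:ℝ)) y
  have hCS : ∀ y z : E, ∫⁻ x, G (x - y) * G (x - z) ≤ A := by
    intro y z
    have hGy : Measurable fun x : E => G (x - y) := hG.comp (measurable_id.sub measurable_const)
    have hGz : Measurable fun x : E => G (x - z) := hG.comp (measurable_id.sub measurable_const)
    calc ∫⁻ x, G (x - y) * G (x - z)
        ≤ (∫⁻ x, G (x - y) ^ (2:ℝ)) ^ (1/2:ℝ) * (∫⁻ x, G (x - z) ^ (2:ℝ)) ^ (1/2:ℝ) :=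
          ENNReal.lintegral_mul_le_Lp_mul_Lq volume ⟨by norm_num, by norm_num, by norm_num⟩
            hGy.aemeasurable hGz.aemeasurable
      _ = A ^ (1/2:ℝ) * A ^ (1/2:ℝ) := by rw [htrans, htrans]
      _ = A := by
          rw [← ENNReal.rpow_add_of_nonneg _ _ (by norm_num) (by norm_num)]
          norm_num
  -- expand the square
  have expand : ∀ x : E, (∫⁻ y, F y * G (x - y)) ^ (2:ℝ)
      = ∫⁻ y, ∫⁻ z, (F y * G (x - y)) * (F z * G (x - z)) := by
    intro x
    have hHx : Measurable fun y : E => F y * G (x - y) :=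
      hF.mul (hG.comp (measurable_const.sub measurable_id))
    rw [sqe, ← lintegral_mul_const _ hHx]
    refine lintegral_congr fun y => ?_
    rw [← lintegral_const_mul _ hHx]
  have core : ∫⁻ x, (∫⁻ y, F y * G (x - y)) ^ (2:ℝ) ≤ I1 * I1 * A := by
    have m1 : AEMeasurable (fun p : E × E =>
        ∫⁻ z, (F p.2 * G (p.1 - p.2)) * (F z * G (p.1 - z))) (volume.prod volume) := by
      apply Measurable.aemeasurable
      apply Measurable.lintegral_prod_right'
        (f := fun q : (E × E) × E => (F q.1.2 * G (q.1.1 - q.1.2)) * (F q.2 * G (q.1.1 - q.2)))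
      exact ((hF.comp (measurable_snd.comp measurable_fst)).mul
          (hG.comp ((measurable_fst.comp measurable_fst).sub
            (measurable_snd.comp measurable_fst)))).mul
        ((hF.comp measurable_snd).mul
          (hG.comp ((measurable_fst.comp measurable_fst).sub measurable_snd)))
    have m2 : ∀ y : E, AEMeasurable (fun p : E × E =>
        (F y * G (p.1 - y)) * (F p.2 * G (p.1 - p.2))) (volume.prod volume) := by
      intro y
      apply Measurable.aemeasurable
      exact ((hF.comp measurable_const).mul
          (hG.comp (measurable_fst.sub measurable_const))).mul
        ((hF.comp measurable_snd).mul (hG.comp (measurable_fst.sub measurable_snd)))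
    calc ∫⁻ x, (∫⁻ y, F y * G (x - y)) ^ (2:ℝ)
        = ∫⁻ x, ∫⁻ y, ∫⁻ z, (F y * G (x - y)) * (F z * G (x - z)) :=
          lintegral_congr expand
      _ = ∫⁻ y, ∫⁻ x, ∫⁻ z, (F y * G (x - y)) * (F z * G (x - z)) :=
          lintegral_lintegral_swap m1
      _ = ∫⁻ y, ∫⁻ z, ∫⁻ x, (F y * G (x - y)) * (F z * G (x - z)) :=
          lintegral_congr fun y => lintegral_lintegral_swap (m2 y)
      _ ≤ ∫⁻ y, ∫⁻ z, (F y * F z) * A := by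
          refine lintegral_mono fun y => lintegral_mono fun z => ?_
          have hGyz : Measurable fun x : E => G (x - y) * G (x - z) :=
            (hG.comp (measurable_id.sub measurable_const)).mul
              (hG.comp (measurable_id.sub measurable_const))
          have : ∫⁻ x, (F y * G (x - y)) * (F z * G (x - z))
              = (F y * F z) * ∫⁻ x, G (x - y) * G (x - z) := by
            rw [← lintegral_const_mul _ hGyz]
            refine lintegral_congr fun x => ?_
            ring
          rw [this]
          exact mul_le_mul_right (hCS y z) _
      _ = I1 * I1 * A := by
          have inner : ∀ y : E, ∫⁻ z, (F y * F z) * A = (F y * A) * I1 := by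
            intro y
            have hz : ∀ z : E, (F y * F z) * A = (F y * A) * F z := fun z => by ring
            rw [lintegral_congr hz, lintegral_const_mul _ hF]
          rw [lintegral_congr inner, lintegral_mul_const _ (f := fun y => F y * A) (hF.mul measurable_const)]
          rw [lintegral_mul_const _ hF]
          ring
  have e2 : ∀ g : E → E, eLpNorm g 2 volume
      = (∫⁻ x, (‖g x‖₊ : ℝ≥0∞) ^ (2:ℝ)) ^ (1/2:ℝ) := by
    intro g
    rw [eLpNorm_eq_lintegral_rpow_enorm_toReal (by norm_num) (by norm_num)]
    simp only [enorm_eq_nnnorm]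
    norm_num
  calc eLpNorm (fun x => ∫ y, f y • K (x - y)) 2 volume
      = (∫⁻ x, (‖∫ y, f y • K (x - y)‖₊ : ℝ≥0∞) ^ (2:ℝ)) ^ (1/2:ℝ) := e2 _
    _ ≤ (I1 * I1 * A) ^ (1/2:ℝ) := by
        refine ENNReal.rpow_le_rpow ?_ (by norm_num)
        refine le_trans (lintegral_mono fun x => ENNReal.rpow_le_rpow (hpt x) (by norm_num)) core
    _ = I1 * A ^ (1/2:ℝ) := by
        rw [← sqe I1, ENNReal.mul_rpow_of_nonneg _ _ (by norm_num), ← ENNReal.rpow_mul]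
        norm_num
    _ = eLpNorm f 1 volume * eLpNorm K 2 volume := by
        rw [e2 K]; exact congrArg (· * A ^ (1/2:ℝ)) (eLpNorm_one_eq_lintegral_enorm (f := f) (μ := volume)).symm


lemma K2_measurable (χ : ℝ → ℝ) (hχ : Continuous χ) (β : ℝ) :
    Measurable (K2 n χ β) := by
  unfold K2
  apply Measurable.smul (f := fun x : E => (1 - χ (β * ‖x‖)) * ‖x‖ ^ (-((n:ℝ) + 1 - β))) _ measurable_id
  apply Measurable.mul
  · exact (measurable_const.sub (hχ.measurable.comp (measurable_const.mul measurable_norm)))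
  · fun_prop

lemma K2_norm_le {χ : ℝ → ℝ} {β : ℝ} (hβ : 0 < β)
    (hχrange : ∀ s, χ s ∈ Set.Icc (0:ℝ) 1)
    (hχ1 : ∀ s : ℝ, |s| ≤ 1 → χ s = 1) (x : E) :
    ‖K2 n χ β x‖ ≤ Set.indicator {x : E | β⁻¹ ≤ ‖x‖} (fun x => ‖x‖ ^ (β - n)) x := by
  by_cases hx : x ∈ {x : E | β⁻¹ ≤ ‖x‖}
  · rw [Set.indicator_of_mem hx]
    have hx : β⁻¹ ≤ ‖x‖ := hx
    have hxpos : (0:ℝ) < ‖x‖ := lt_of_lt_of_le (inv_pos.2 hβ) hx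
    rw [K2, norm_smul, Real.norm_eq_abs, abs_mul]
    have h1 : |1 - χ (β * ‖x‖)| ≤ 1 := by
      have := hχrange (β * ‖x‖)
      rw [abs_le]; constructor <;> [linarith [this.2]; linarith [this.1]]
    have h2 : |‖x‖ ^ (-((n:ℝ) + 1 - β))| = ‖x‖ ^ (-((n:ℝ) + 1 - β)) :=
      abs_of_nonneg (Real.rpow_nonneg (norm_nonneg _) _)
    calc |1 - χ (β * ‖x‖)| * |‖x‖ ^ (-((n:ℝ) + 1 - β))| * ‖x‖
        ≤ 1 * |‖x‖ ^ (-((n:ℝ) + 1 - β))| * ‖x‖ := by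
          apply mul_le_mul_of_nonneg_right (mul_le_mul_of_nonneg_right h1 (abs_nonneg _))
            (norm_nonneg _)
      _ = ‖x‖ ^ (-((n:ℝ) + 1 - β)) * ‖x‖ ^ (1:ℝ) := by
          rw [one_mul, h2, Real.rpow_one]
      _ = ‖x‖ ^ (β - n) := by
          rw [← Real.rpow_add hxpos]; ring_nf
  · rw [Set.indicator_of_notMem hx]
    have hx : ¬ β⁻¹ ≤ ‖x‖ := hx
    have hxle : β * ‖x‖ ≤ 1 := by
      rw [not_le] at hx
      have := hx.le
      calc β * ‖x‖ ≤ β * β⁻¹ := by nlinarith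
        _ = 1 := mul_inv_cancel₀ hβ.ne'
    have : χ (β * ‖x‖) = 1 := hχ1 _ (by rwa [abs_of_nonneg (by positivity)])
    rw [K2, this]
    simp

lemma sq_K2_le {χ : ℝ → ℝ} {β : ℝ} (hβ : 0 < β)
    (hχrange : ∀ s, χ s ∈ Set.Icc (0:ℝ) 1)
    (hχ1 : ∀ s : ℝ, |s| ≤ 1 → χ s = 1) (x : E) :
    (‖K2 n χ β x‖₊ : ℝ≥0∞) ^ (2:ℝ) ≤
      ENNReal.ofReal
        (Set.indicator {x : E | β⁻¹ ≤ ‖x‖} (fun x => ‖x‖ ^ (-(2*(n:ℝ) - 2*β))) x) := by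
  rw [← enorm_eq_nnnorm, ← ofReal_norm, ENNReal.ofReal_rpow_of_nonneg (norm_nonneg _) (by norm_num)]
  apply ENNReal.ofReal_le_ofReal
  calc ‖K2 n χ β x‖ ^ (2:ℝ)
      ≤ (Set.indicator {x : E | β⁻¹ ≤ ‖x‖} (fun x => ‖x‖ ^ (β - n)) x) ^ (2:ℝ) := by
        apply Real.rpow_le_rpow (norm_nonneg _) (K2_norm_le hβ hχrange hχ1 x) (by norm_num)
    _ = Set.indicator {x : E | β⁻¹ ≤ ‖x‖} (fun x => ‖x‖ ^ (-(2*(n:ℝ) - 2*β))) x := by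
        by_cases hx : x ∈ {x : E | β⁻¹ ≤ ‖x‖}
        · rw [Set.indicator_of_mem hx, Set.indicator_of_mem hx,
            ← Real.rpow_mul (norm_nonneg _)]
          ring_nf
        · rw [Set.indicator_of_notMem hx, Set.indicator_of_notMem hx,
            Real.zero_rpow (by norm_num)]


lemma lintegral_K2_sq_le (hn : 1 ≤ n) {χ : ℝ → ℝ} {β : ℝ} (hβ : 0 < β) (hβn : β < (n:ℝ) / 2)
    (hχrange : ∀ s, χ s ∈ Set.Icc (0:ℝ) 1) (hχ1 : ∀ s : ℝ, |s| ≤ 1 → χ s = 1) :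
    ∫⁻ x : E, (‖K2 n χ β x‖₊ : ℝ≥0∞) ^ (2:ℝ) ≤
      ENNReal.ofReal ((volume (closedBall (0:E) 1)).toReal *
        (Real.exp 2 * (2*n) * β ^ (n:ℝ) / ((n:ℝ) - 2*β))) := by
  have hn1 : (1:ℝ) ≤ (n:ℝ) := by exact_mod_cast hn
  set s : ℝ := 2*(n:ℝ) - 2*β with hs_def
  have hs0 : 0 < s := by simp only [hs_def]; linarith
  have hns : (n:ℝ) < s := by simp only [hs_def]; linarith
  set S : Set E := {x : E | β⁻¹ ≤ ‖x‖} with hS_def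
  have hSmeas : MeasurableSet S := (isClosed_le continuous_const continuous_norm).measurableSet
  set h : E → ℝ := S.indicator (fun x => ‖x‖ ^ (-s)) with hh_def
  have h_nn : ∀ x, 0 ≤ h x :=
    fun x => Set.indicator_nonneg (fun y _ => Real.rpow_nonneg (norm_nonneg _) _) x
  have h_meas : Measurable h := by
    apply Measurable.indicator _ hSmeas
    fun_prop
  have step0 : ∫⁻ x : E, (‖K2 n χ β x‖₊ : ℝ≥0∞) ^ (2:ℝ) ≤ ∫⁻ x : E, ENNReal.ofReal (h x) :=
    lintegral_mono fun x => sq_K2_le hβ hχrange hχ1 x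
  rw [lintegral_eq_lintegral_meas_le volume (Filter.Eventually.of_forall h_nn)
    h_meas.aemeasurable] at step0
  set A₀ : ℝ := β ^ s with hA₀_def
  have hA₀pos : 0 < A₀ := Real.rpow_pos_of_pos hβ _
  set V := volume (closedBall (0:E) 1) with hV_def
  have hVne : V ≠ ⊤ := measure_closedBall_lt_top.ne
  set r : ℝ := -((n:ℝ)/s) with hr_def
  have hr1 : (-1:ℝ) < r := by
    rw [hr_def, neg_lt_neg_iff, div_lt_one hs0]
    exact hns
  have hr0 : r + 1 ≠ 0 := ne_of_gt (by linarith)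
  -- pointwise bound on the distribution function
  have bound : ∀ t ∈ Ioi (0:ℝ), volume {x : E | t ≤ h x} ≤
      (Ioc (0:ℝ) A₀).indicator (fun t => ENNReal.ofReal (t ^ r) * V) t := by
    intro t ht
    have ht : (0:ℝ) < t := ht
    have memS : ∀ x : E, t ≤ h x → x ∈ S ∧ t ≤ ‖x‖ ^ (-s) := by
      intro x hxt
      by_cases hxS : x ∈ S
      · exact ⟨hxS, le_of_le_of_eq hxt (Set.indicator_of_mem hxS _)⟩
      · rw [hh_def, Set.indicator_of_notMem hxS] at hxt
        exact absurd (ht.trans_le hxt) (lt_irrefl 0)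
    by_cases htA : t ≤ A₀
    · rw [Set.indicator_of_mem (Set.mem_Ioc.2 ⟨ht, htA⟩)]
      have hsub : {x : E | t ≤ h x} ⊆ closedBall (0:E) (t ^ (-1/s)) := by
        intro x hxt
        obtain ⟨hxS, hxle⟩ := memS x hxt
        have hxpos : 0 < ‖x‖ := lt_of_lt_of_le (inv_pos.2 hβ) hxS
        rw [mem_closedBall_zero_iff]
        calc ‖x‖ = (‖x‖ ^ (-s)) ^ (-1/s) := by
              rw [← Real.rpow_mul (norm_nonneg _), show (-s)*(-1/s) = 1 by field_simp,
                Real.rpow_one]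
          _ ≤ t ^ (-1/s) := Real.rpow_le_rpow_of_nonpos ht hxle (by
              rw [neg_div]
              exact neg_nonpos.2 (by positivity))
      calc volume {x : E | t ≤ h x} ≤ volume (closedBall (0:E) (t ^ (-1/s))) :=
            measure_mono hsub
        _ = ENNReal.ofReal ((t ^ (-1/s)) ^ Module.finrank ℝ E) * V :=
            Measure.addHaar_closedBall' _ _ (Real.rpow_nonneg ht.le _)
        _ = ENNReal.ofReal (t ^ r) * V := by
            congr 2
            rw [finrank_euclideanSpace, Fintype.card_fin, ← Real.rpow_natCast (t ^ (-1/s)) n,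
              ← Real.rpow_mul ht.le, hr_def, show (-1/s)*(n:ℝ) = -((n:ℝ)/s) by ring]
    · rw [Set.indicator_of_notMem (fun hmem => htA hmem.2)]
      have hempty : {x : E | t ≤ h x} = ∅ := by
        ext x
        simp only [Set.mem_setOf_eq, Set.mem_empty_iff_false, iff_false, not_le]
        by_contra hcon
        push_neg at hcon
        obtain ⟨hxS, hxle⟩ := memS x hcon
        have hxS' : β⁻¹ ≤ ‖x‖ := hxS
        have h1 : ‖x‖ ^ (-s) ≤ (β⁻¹) ^ (-s) :=
          Real.rpow_le_rpow_of_nonpos (inv_pos.2 hβ) hxS' (neg_nonpos.2 hs0.le)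
        have h2 : (β⁻¹) ^ (-s) = A₀ := by
          rw [Real.rpow_neg (inv_nonneg.2 hβ.le), Real.inv_rpow hβ.le, inv_inv]
        rw [h2] at h1
        exact htA (hxle.trans h1)
      rw [hempty, measure_empty]
  -- integrability of the 1d integrand
  have hint : IntegrableOn (fun t : ℝ => t ^ r) (Ioc 0 A₀) volume :=
    (intervalIntegrable_iff_integrableOn_Ioc_of_le hA₀pos.le).1 (intervalIntegrable_rpow' hr1)
  have hnn : 0 ≤ᵐ[volume.restrict (Ioc (0:ℝ) A₀)] fun t : ℝ => t ^ r :=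
    (ae_restrict_iff' measurableSet_Ioc).2
      (Filter.Eventually.of_forall fun t htt => Real.rpow_nonneg htt.1.le _)
  have val : ∫ t in Ioc (0:ℝ) A₀, t ^ r = A₀ ^ (r+1) / (r+1) := by
    have hrint := @integral_rpow 0 A₀ r (Or.inl hr1)
    rw [← intervalIntegral.integral_of_le hA₀pos.le, hrint, Real.zero_rpow hr0, sub_zero]
  -- the key real-number estimate
  have key : A₀ ^ (r+1) / (r+1) ≤ Real.exp 2 * (2*n) * β ^ (n:ℝ) / ((n:ℝ) - 2*β) := by
    have e1 : A₀ ^ (r+1) = β ^ (s - (n:ℝ)) := by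
      rw [hA₀_def, ← Real.rpow_mul hβ.le]
      congr 1
      rw [hr_def]
      field_simp
      ring
    have e2 : β ^ (s - (n:ℝ)) = β ^ (n:ℝ) * β ^ ((n:ℝ) - 2*β - (n:ℝ)) := by
      rw [← Real.rpow_add hβ]
      congr 1
      simp only [hs_def]
      ring
    have e3 : β ^ ((n:ℝ) - 2*β - (n:ℝ)) ≤ Real.exp 2 := by
      have : (n:ℝ) - 2*β - (n:ℝ) = -(2*β) := by ring
      rw [this, Real.rpow_def_of_pos hβ]
      apply Real.exp_le_exp.2
      have hlog : -Real.log β ≤ β⁻¹ - 1 := by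
        have := Real.log_le_sub_one_of_pos (inv_pos.2 hβ)
        rwa [Real.log_inv] at this
      nlinarith [mul_le_mul_of_nonneg_left hlog hβ.le, mul_inv_cancel₀ hβ.ne']
    have e4 : r + 1 = (s - (n:ℝ))/s := by
      rw [hr_def]
      field_simp
      ring
    have hsn : s - (n:ℝ) = (n:ℝ) - 2*β := by simp only [hs_def]; ring
    have hsnpos : 0 < (n:ℝ) - 2*β := by linarith
    rw [e1, e2, e4, hsn, div_div_eq_mul_div, div_le_div_iff₀ (by positivity) hsnpos]
    have hβn' : 0 < β ^ (n:ℝ) := Real.rpow_pos_of_pos hβ _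
    have hs2n : s ≤ 2*(n:ℝ) := by simp only [hs_def]; linarith
    calc β ^ (n:ℝ) * β ^ ((n:ℝ) - 2*β - (n:ℝ)) * s * ((n:ℝ) - 2*β)
        ≤ β ^ (n:ℝ) * Real.exp 2 * (2*(n:ℝ)) * ((n:ℝ) - 2*β) := by
          have h5 : β ^ (n:ℝ) * β ^ ((n:ℝ) - 2*β - (n:ℝ)) * s
              ≤ β ^ (n:ℝ) * Real.exp 2 * (2*(n:ℝ)) := by
            apply mul_le_mul (mul_le_mul_of_nonneg_left e3 hβn'.le) hs2n hs0.le
            positivity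
          exact mul_le_mul_of_nonneg_right h5 hsnpos.le
      _ = Real.exp 2 * (2*(n:ℝ)) * β ^ (n:ℝ) * ((n:ℝ) - 2*β) := by ring
  -- put everything together
  refine step0.trans ?_
  calc ∫⁻ t in Ioi (0:ℝ), volume {x : E | t ≤ h x}
      ≤ ∫⁻ t in Ioi (0:ℝ), (Ioc (0:ℝ) A₀).indicator
          (fun t => ENNReal.ofReal (t ^ r) * V) t :=
        setLIntegral_mono' measurableSet_Ioi bound
    _ = ∫⁻ t in Ioc (0:ℝ) A₀, ENNReal.ofReal (t ^ r) * V := by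
        rw [lintegral_indicator measurableSet_Ioc, Measure.restrict_restrict measurableSet_Ioc,
          Set.inter_eq_self_of_subset_left Set.Ioc_subset_Ioi_self]
    _ = (∫⁻ t in Ioc (0:ℝ) A₀, ENNReal.ofReal (t ^ r)) * V :=
        lintegral_mul_const _ (by fun_prop)
    _ = ENNReal.ofReal (A₀ ^ (r+1) / (r+1)) * V := by
        rw [← ofReal_integral_eq_lintegral_ofReal hint hnn, val]
    _ ≤ ENNReal.ofReal (V.toReal *
          (Real.exp 2 * (2*n) * β ^ (n:ℝ) / ((n:ℝ) - 2*β))) := by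
        conv_lhs => rw [← ENNReal.ofReal_toReal hVne]
        rw [← ENNReal.ofReal_mul (div_nonneg (Real.rpow_nonneg hA₀pos.le _) (by linarith))]
        apply ENNReal.ofReal_le_ofReal
        rw [mul_comm]
        exact mul_le_mul_of_nonneg_left key ENNReal.toReal_nonneg


lemma eLpNorm_two_eq {α : Type*} [MeasurableSpace α] {μ : Measure α} (g : α → E) :
    eLpNorm g 2 μ = (∫⁻ x, (‖g x‖₊ : ℝ≥0∞) ^ (2:ℝ) ∂μ) ^ (1/2:ℝ) := by
  rw [eLpNorm_eq_lintegral_rpow_enorm_toReal (by norm_num) (by norm_num)]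
  simp only [enorm_eq_nnnorm]
  norm_num

lemma eLpNorm_K2_le (hn : 1 ≤ n) {χ : ℝ → ℝ} {β : ℝ} (hβ : 0 < β) (hβn : β < (n:ℝ) / 2)
    (hχrange : ∀ s, χ s ∈ Set.Icc (0:ℝ) 1) (hχ1 : ∀ s : ℝ, |s| ≤ 1 → χ s = 1) :
    eLpNorm (K2 n χ β) 2 volume ≤
      ENNReal.ofReal
        ((Real.sqrt ((volume (closedBall (0:E) 1)).toReal * (Real.exp 2 * (2*(n:ℝ)))) + 1) *
          β ^ ((n:ℝ)/2) / Real.sqrt ((n:ℝ) - 2*β)) := by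
  set v : ℝ := (volume (closedBall (0:E) 1)).toReal with hv_def
  have hv0 : 0 ≤ v := ENNReal.toReal_nonneg
  have hsn : (0:ℝ) < (n:ℝ) - 2*β := by linarith
  set D : ℝ := v * (Real.exp 2 * (2*n) * β ^ (n:ℝ) / ((n:ℝ) - 2*β)) with hD_def
  have hD0 : 0 ≤ D := by
    apply mul_nonneg hv0
    apply div_nonneg _ hsn.le
    positivity
  have hsqrtD : Real.sqrt D = Real.sqrt (v * (Real.exp 2 * (2*(n:ℝ)))) * β ^ ((n:ℝ)/2) /
      Real.sqrt ((n:ℝ) - 2*β) := by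
    have : D = (v * (Real.exp 2 * (2*(n:ℝ))) * β ^ (n:ℝ)) / ((n:ℝ) - 2*β) := by
      rw [hD_def]; ring
    have hsb : Real.sqrt (β ^ (n:ℝ)) = β ^ ((n:ℝ)/2) := by
      rw [Real.sqrt_eq_rpow, ← Real.rpow_mul hβ.le, show (n:ℝ)*(1/2) = (n:ℝ)/2 by ring]
    rw [this, Real.sqrt_div (by positivity), Real.sqrt_mul (by positivity), hsb]
  calc eLpNorm (K2 n χ β) 2 volume
      = (∫⁻ x : E, (‖K2 n χ β x‖₊ : ℝ≥0∞) ^ (2:ℝ)) ^ (1/2:ℝ) := eLpNorm_two_eq _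
    _ ≤ (ENNReal.ofReal D) ^ (1/2:ℝ) :=
        ENNReal.rpow_le_rpow (lintegral_K2_sq_le hn hβ hβn hχrange hχ1) (by norm_num)
    _ = ENNReal.ofReal (D ^ (1/2:ℝ)) := ENNReal.ofReal_rpow_of_nonneg hD0 (by norm_num)
    _ = ENNReal.ofReal (Real.sqrt (v * (Real.exp 2 * (2*(n:ℝ)))) * β ^ ((n:ℝ)/2) /
          Real.sqrt ((n:ℝ) - 2*β)) := by rw [← Real.sqrt_eq_rpow, hsqrtD]
    _ ≤ ENNReal.ofReal
          ((Real.sqrt (v * (Real.exp 2 * (2*(n:ℝ)))) + 1) * β ^ ((n:ℝ)/2) /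
            Real.sqrt ((n:ℝ) - 2*β)) := by
        apply ENNReal.ofReal_le_ofReal
        rw [div_eq_mul_inv, div_eq_mul_inv]
        apply mul_le_mul_of_nonneg_right _ (inv_nonneg.2 (Real.sqrt_nonneg _))
        exact mul_le_mul_of_nonneg_right (by linarith) (Real.rpow_nonneg hβ.le _)

end Aux

/-- `L¹ → L²` bound for `T₂` with constant `C(n)·β^{n/2}/√(n−2β)`, `C` independent of `β`. -/
theorem statement9 (n : ℕ) (hn : 1 ≤ n) (χ : ℝ → ℝ) (hχsmooth : ContDiff ℝ (⊤ : ℕ∞) χ)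
    (hχrange : ∀ s, χ s ∈ Set.Icc (0:ℝ) 1)
    (hχ1 : ∀ s : ℝ, |s| ≤ 1 → χ s = 1) (hχ0 : ∀ s : ℝ, 2 ≤ |s| → χ s = 0) :
    ∃ C : ℝ, 0 < C ∧ ∀ β : ℝ, 0 < β → β < n / 2 →
      ∀ f : EuclideanSpace ℝ (Fin n) → ℝ, Integrable f volume →
        eLpNorm (T2 n χ β f) 2 volume ≤
          ENNReal.ofReal (C * β ^ ((n : ℝ)/2) / Real.sqrt ((n : ℝ) - 2*β)) *
            eLpNorm f 1 volume := by
  refine ⟨Real.sqrt ((volume (Metric.closedBall (0:EuclideanSpace ℝ (Fin n)) 1)).toReal *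
      (Real.exp 2 * (2*(n:ℝ)))) + 1, by positivity, ?_⟩
  intro β hβ hβn f hf
  obtain ⟨f', hf'meas, hff'⟩ : ∃ f', StronglyMeasurable f' ∧ f =ᵐ[volume] f' :=
    ⟨hf.1.mk f, hf.1.stronglyMeasurable_mk, hf.1.ae_eq_mk⟩
  have hT : T2 n χ β f = T2 n χ β f' :=
    funext fun x => integral_congr_ae (hff'.mono fun y hy => by dsimp only; rw [hy])
  have hL1 : eLpNorm f 1 volume = eLpNorm f' 1 volume := eLpNorm_congr_ae hff'
  have hK2bound := eLpNorm_K2_le hn hβ hβn hχrange hχ1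
  calc eLpNorm (T2 n χ β f) 2 volume
      = eLpNorm (fun x => ∫ y, f' y • K2 n χ β (x - y)) 2 volume := by rw [hT]; rfl
    _ ≤ eLpNorm f' 1 volume * eLpNorm (K2 n χ β) 2 volume :=
        young_conv (K2_measurable χ hχsmooth.continuous β) hf'meas.measurable
    _ ≤ eLpNorm f' 1 volume * ENNReal.ofReal
          ((Real.sqrt ((volume (Metric.closedBall (0:EuclideanSpace ℝ (Fin n)) 1)).toReal *
            (Real.exp 2 * (2*(n:ℝ)))) + 1) * β ^ ((n:ℝ)/2) / Real.sqrt ((n:ℝ) - 2*β)) :=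
        mul_le_mul_right hK2bound _
    _ = ENNReal.ofReal
          ((Real.sqrt ((volume (Metric.closedBall (0:EuclideanSpace ℝ (Fin n)) 1)).toReal *
            (Real.exp 2 * (2*(n:ℝ)))) + 1) * β ^ ((n:ℝ)/2) / Real.sqrt ((n:ℝ) - 2*β)) *
          eLpNorm f 1 volume := by rw [mul_comm, hL1]

end
end

section
/- Let n ≥ 1 and 0 < β < 1. With K₂ as above (kernel x/|x|^{n+1-β} cut off to |x| ≥ 1/β by 1−χ(β|x|)), for each i = 1,…,n the derivative ∂ᵢK₂ satisfies ‖∂ᵢK₂‖_{L¹(ℝⁿ)} ≤ C(n) ( β^{1-β}/(1−β) + (2^β−1) β^{-β}/β ), with C(n) independent of β. -/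
open MeasureTheory

noncomputable section

namespace Statement10Aux

open Set
lemma aux_norm_deriv {E : Type*} [NormedAddCommGroup E] [InnerProductSpace ℝ E]
    {x : E} (hx : x ≠ 0) :
    HasFDerivAt (fun y : E => ‖y‖) (‖x‖⁻¹ • innerSL ℝ x) x := by
  have hnx : (0:ℝ) < ‖x‖ := norm_pos_iff.2 hx
  have hx2 : ‖x‖ ^ 2 ≠ 0 := pow_ne_zero 2 hnx.ne'
  have h1 : HasFDerivAt (fun y : E => ‖y‖ ^ 2) (2 • innerSL ℝ x) x :=
    (hasStrictFDerivAt_norm_sq x).hasFDerivAt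
  have h2 : HasDerivAt Real.sqrt (1 / (2 * Real.sqrt (‖x‖ ^ 2))) (‖x‖ ^ 2) :=
    Real.hasDerivAt_sqrt hx2
  have h3 := h2.comp_hasFDerivAt x h1
  have e1 : (fun y : E => Real.sqrt (‖y‖ ^ 2)) = fun y : E => ‖y‖ := by
    funext y; rw [Real.sqrt_sq (norm_nonneg y)]
  rw [Function.comp_def, e1] at h3
  refine h3.congr_fderiv ?_
  ext v
  simp only [ContinuousLinearMap.coe_smul', Pi.smul_apply, ContinuousLinearMap.smul_apply,
    Real.sqrt_sq (norm_nonneg x), smul_eq_mul, two_smul, ContinuousLinearMap.add_apply]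
  have hnx' : ‖x‖ ≠ 0 := hnx.ne'
  field_simp
  ring

lemma aux_phi_deriv (n : ℕ) (χ : ℝ → ℝ) (β : ℝ) (hχsmooth : ContDiff ℝ (⊤ : ℕ∞) χ)
    {r : ℝ} (hr : r ≠ 0) :
    HasDerivAt (fun r : ℝ => (1 - χ (β * r)) * r ^ (-((n : ℝ) + 1 - β)))
      ((-(deriv χ (β * r) * β)) * r ^ (-((n : ℝ) + 1 - β))
        + (1 - χ (β * r)) * ((-((n : ℝ) + 1 - β)) * r ^ (-((n : ℝ) + 1 - β) - 1))) r := by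
  have hχd : HasDerivAt χ (deriv χ (β * r)) (β * r) :=
    (hχsmooth.differentiable (by simp) (β * r)).hasDerivAt
  have h2 : HasDerivAt (fun r : ℝ => β * r) β r := by
    simpa using (hasDerivAt_id r).const_mul β
  have h3 : HasDerivAt (fun r : ℝ => χ (β * r)) (deriv χ (β * r) * β) r := hχd.comp r h2
  have h4 : HasDerivAt (fun r : ℝ => 1 - χ (β * r)) (-(deriv χ (β * r) * β)) r :=
    h3.const_sub 1
  have h5 : HasDerivAt (fun r : ℝ => r ^ (-((n:ℝ)+1-β)))
      ((-((n:ℝ)+1-β)) * r ^ (-((n:ℝ)+1-β) - 1)) r :=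
    Real.hasDerivAt_rpow_const (Or.inl hr)
  exact h4.mul h5

lemma aux_K2_deriv (n : ℕ) (χ : ℝ → ℝ) (β : ℝ) (hχsmooth : ContDiff ℝ (⊤ : ℕ∞) χ)
    {x : EuclideanSpace ℝ (Fin n)} (hx : x ≠ 0) :
    HasFDerivAt (K2 n χ β)
      (((1 - χ (β * ‖x‖)) * ‖x‖ ^ (-((n:ℝ)+1-β))) •
          ContinuousLinearMap.id ℝ (EuclideanSpace ℝ (Fin n))
        + (((-(deriv χ (β*‖x‖) * β)) * ‖x‖ ^ (-((n:ℝ)+1-β))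
            + (1 - χ (β*‖x‖)) * ((-((n:ℝ)+1-β)) * ‖x‖ ^ (-((n:ℝ)+1-β)-1))) •
            (‖x‖⁻¹ • innerSL ℝ x)).smulRight x) x := by
  have hφ := aux_phi_deriv n χ β hχsmooth (norm_ne_zero_iff.2 hx)
  have hc := hφ.comp_hasFDerivAt x (aux_norm_deriv hx)
  have h := hc.smul (hasFDerivAt_id x)
  exact h
def Gfun (n : ℕ) (β : ℝ) (r : ℝ) : ℝ :=
  Set.indicator (Set.Ici (1/β)) (fun r => ((n:ℝ)+2) * r ^ (β - (n:ℝ) - 1)) r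
  + Set.indicator (Set.Icc (1/β) (2/β)) (fun r => 2*β * r ^ (β - (n:ℝ))) r

lemma Gfun_nonneg (n : ℕ) {β : ℝ} (hβ : 0 < β) (r : ℝ) : 0 ≤ Gfun n β r := by
  unfold Gfun
  have h1 : 0 ≤ Set.indicator (Set.Ici (1/β)) (fun r => ((n:ℝ)+2) * r ^ (β - (n:ℝ) - 1)) r := by
    apply Set.indicator_nonneg
    intro y hy
    have hy0 : 0 ≤ y := le_trans (by positivity) hy
    positivity
  have h2 : 0 ≤ Set.indicator (Set.Icc (1/β) (2/β)) (fun r => 2*β * r ^ (β - (n:ℝ))) r := by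
    apply Set.indicator_nonneg
    intro y hy
    have hy0 : 0 ≤ y := le_trans (by positivity) hy.1
    positivity
  linarith

lemma deriv_chi_zero (χ : ℝ → ℝ) (hχ0 : ∀ s : ℝ, 2 ≤ |s| → χ s = 0) {s : ℝ} (hs : 2 < s) :
    deriv χ s = 0 := by
  have h : χ =ᶠ[nhds s] fun _ => (0:ℝ) := by
    filter_upwards [Ioi_mem_nhds hs] with t ht
    exact hχ0 t (by rw [abs_of_nonneg (by linarith [mem_Ioi.1 ht] : (0:ℝ) ≤ t)]; linarith [mem_Ioi.1 ht])
  rw [h.deriv_eq, deriv_const]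


lemma aux_fderiv_small (n : ℕ) (χ : ℝ → ℝ) (β : ℝ)
    (hχ1 : ∀ s : ℝ, |s| ≤ 1 → χ s = 1) (hβ0 : 0 < β)
    {x : EuclideanSpace ℝ (Fin n)} (hlt : ‖x‖ < 1/β) :
    fderiv ℝ (K2 n χ β) x = 0 := by
  have hK : K2 n χ β =ᶠ[nhds x] fun _ => (0 : EuclideanSpace ℝ (Fin n)) := by
    have hball : Metric.ball x (1/β - ‖x‖) ∈ nhds x := Metric.ball_mem_nhds x (by linarith)
    filter_upwards [hball] with y hy
    have hylt : ‖y‖ < 1/β := by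
      have hd : ‖y - x‖ < 1/β - ‖x‖ := by
        rw [← dist_eq_norm]; exact Metric.mem_ball.1 hy
      calc ‖y‖ = ‖y - x + x‖ := by rw [sub_add_cancel]
        _ ≤ ‖y - x‖ + ‖x‖ := norm_add_le _ _
        _ < 1/β := by linarith
    have hχval : χ (β * ‖y‖) = 1 := by
      apply hχ1
      rw [abs_of_nonneg (by positivity)]
      have : β * ‖y‖ < β * (1/β) := by
        exact mul_lt_mul_of_pos_left hylt hβ0
      rw [mul_one_div, div_self hβ0.ne'] at this
      linarith
    show ((1 - χ (β * ‖y‖)) * ‖y‖ ^ (-((n : ℝ) + 1 - β))) • y = 0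
    rw [hχval]
    simp
  calc fderiv ℝ (K2 n χ β) x
      = fderiv ℝ (fun _ => (0 : EuclideanSpace ℝ (Fin n))) x := hK.fderiv_eq
    _ = 0 := fderiv_const_apply 0

lemma aux_pointwise_large (n : ℕ) (χ : ℝ → ℝ) (β : ℝ)
    (hχrange : ∀ s, χ s ∈ Set.Icc (0:ℝ) 1)
    (hχ0 : ∀ s : ℝ, 2 ≤ |s| → χ s = 0) (hχ' : ∀ s : ℝ, |deriv χ s| ≤ 2)
    (hβ0 : 0 < β) (hβ1 : β < 1)
    (hχsmooth : ContDiff ℝ (⊤ : ℕ∞) χ)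
    (i : Fin n) (x : EuclideanSpace ℝ (Fin n)) (hge : 1/β ≤ ‖x‖) :
    ‖fderiv ℝ (K2 n χ β) x (EuclideanSpace.single i 1)‖ ≤ Gfun n β ‖x‖ := by
  have hr0 : (0:ℝ) < ‖x‖ := lt_of_lt_of_le (by positivity) hge
  have hx : x ≠ 0 := norm_pos_iff.1 hr0
  set r := ‖x‖ with hr
  set e : EuclideanSpace ℝ (Fin n) := EuclideanSpace.single i (1:ℝ) with he
  have hne : ‖e‖ = 1 := by rw [he, EuclideanSpace.norm_single]; norm_num
  rw [(aux_K2_deriv n χ β hχsmooth hx).fderiv]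
  set Φ : ℝ := (1 - χ (β * r)) * r ^ (-((n:ℝ)+1-β)) with hΦ
  set Φ' : ℝ := (-(deriv χ (β*r) * β)) * r ^ (-((n:ℝ)+1-β))
            + (1 - χ (β*r)) * ((-((n:ℝ)+1-β)) * r ^ (-((n:ℝ)+1-β)-1)) with hΦ'
  have happ : (Φ • ContinuousLinearMap.id ℝ (EuclideanSpace ℝ (Fin n))
      + (Φ' • (r⁻¹ • innerSL ℝ x)).smulRight x) e
      = Φ • e + ((Φ' * (r⁻¹ * (inner ℝ x e : ℝ)))) • x := by
    simp [ContinuousLinearMap.smulRight_apply, mul_assoc, smul_smul]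
  rw [happ]
  have hiprod : |(inner ℝ x e : ℝ)| ≤ r := by
    calc |(inner ℝ x e : ℝ)| ≤ ‖x‖ * ‖e‖ := abs_real_inner_le_norm x e
    _ = r := by rw [hne, mul_one]
  have hbound : ‖Φ • e + ((Φ' * (r⁻¹ * (inner ℝ x e : ℝ)))) • x‖ ≤ |Φ| + |Φ'| * r := by
    refine le_trans (norm_add_le _ _) ?_
    rw [norm_smul, norm_smul, hne, Real.norm_eq_abs, Real.norm_eq_abs, mul_one]
    have h2 : |Φ' * (r⁻¹ * (inner ℝ x e : ℝ))| * ‖x‖ ≤ |Φ'| * r := by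
      rw [abs_mul, abs_mul, abs_inv, abs_of_pos hr0, ← hr]
      have h3 : r⁻¹ * |(inner ℝ x e : ℝ)| ≤ 1 := by
        rw [← inv_mul_cancel₀ hr0.ne']
        exact mul_le_mul_of_nonneg_left hiprod (inv_nonneg.2 hr0.le)
      have h4 := mul_le_mul_of_nonneg_right
        (mul_le_mul_of_nonneg_left h3 (abs_nonneg Φ')) hr0.le
      simpa using h4
    linarith
  refine le_trans hbound ?_
  -- now numeric estimates
  have hrpow_pos : ∀ s : ℝ, (0:ℝ) < r ^ s := fun s => Real.rpow_pos_of_pos hr0 s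
  have hexp1 : -((n:ℝ)+1-β) = β - (n:ℝ) - 1 := by ring
  have hchi01 := hχrange (β * r)
  have habs1 : |1 - χ (β*r)| ≤ 1 := by
    rw [abs_le]; constructor <;> [linarith [hchi01.2]; linarith [hchi01.1]]
  have hΦbound : |Φ| ≤ r ^ (β - (n:ℝ) - 1) := by
    rw [hΦ, abs_mul, hexp1, abs_of_pos (hrpow_pos _)]
    nlinarith [hrpow_pos (β - (n:ℝ) - 1), habs1, abs_nonneg (1 - χ (β*r))]
  have hrpow_mul1 : r ^ (β - (n:ℝ) - 1) * r = r ^ (β - (n:ℝ)) := by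
    rw [← Real.rpow_add_one hr0.ne']; ring_nf
  have hrpow_mul2 : r ^ (β - (n:ℝ) - 1 - 1) * r = r ^ (β - (n:ℝ) - 1) := by
    rw [← Real.rpow_add_one hr0.ne']; ring_nf
  have habsΦ' : |Φ'| ≤ |deriv χ (β*r)| * β * r ^ (β-(n:ℝ)-1)
      + ((n:ℝ)+1) * r ^ (β-(n:ℝ)-1-1) := by
    rw [hΦ', hexp1]
    refine le_trans (abs_add_le _ _) ?_
    have e1 : |(-(deriv χ (β*r) * β)) * r ^ (β-(n:ℝ)-1)|
        = |deriv χ (β*r)| * β * r ^ (β-(n:ℝ)-1) := by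
      rw [abs_mul, abs_neg, abs_mul, abs_of_pos hβ0, abs_of_pos (hrpow_pos _)]
    have e2 : |(1 - χ (β*r)) * ((β-(n:ℝ)-1) * r ^ (β-(n:ℝ)-1-1))|
        ≤ ((n:ℝ)+1) * r ^ (β-(n:ℝ)-1-1) := by
      rw [abs_mul, abs_mul, abs_of_pos (hrpow_pos _)]
      have hb : |β-(n:ℝ)-1| ≤ (n:ℝ)+1 := by
        rw [abs_of_neg (by nlinarith [Nat.cast_nonneg (α := ℝ) n] : β-(n:ℝ)-1 < 0)]
        nlinarith [Nat.cast_nonneg (α := ℝ) n]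
      have hmm : |1 - χ (β*r)| * (|β-(n:ℝ)-1| * r ^ (β-(n:ℝ)-1-1))
          ≤ 1 * (((n:ℝ)+1) * r ^ (β-(n:ℝ)-1-1)) :=
        mul_le_mul habs1 (mul_le_mul_of_nonneg_right hb (hrpow_pos _).le)
          (by positivity) zero_le_one
      linarith [hmm]
    linarith
  have hΦ'bound : |Φ'| * r ≤ |deriv χ (β*r)| * β * r ^ (β - (n:ℝ))
      + ((n:ℝ)+1) * r ^ (β - (n:ℝ) - 1) := by
    calc |Φ'| * r ≤ (|deriv χ (β*r)| * β * r ^ (β-(n:ℝ)-1)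
          + ((n:ℝ)+1) * r ^ (β-(n:ℝ)-1-1)) * r := mul_le_mul_of_nonneg_right habsΦ' hr0.le
      _ = |deriv χ (β*r)| * β * (r ^ (β-(n:ℝ)-1) * r)
          + ((n:ℝ)+1) * (r ^ (β-(n:ℝ)-1-1) * r) := by ring
      _ = _ := by rw [hrpow_mul1, hrpow_mul2]
  -- combine with Gfun
  have hG1 : Set.indicator (Set.Ici (1/β)) (fun r => ((n:ℝ)+2) * r ^ (β - (n:ℝ) - 1)) r
      = ((n:ℝ)+2) * r ^ (β - (n:ℝ) - 1) := Set.indicator_of_mem (Set.mem_Ici.2 hge) _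
  rcases le_or_gt r (2/β) with hle2 | hgt2
  · have hG2 : Set.indicator (Set.Icc (1/β) (2/β)) (fun r => 2*β * r ^ (β - (n:ℝ))) r
        = 2*β * r ^ (β - (n:ℝ)) := Set.indicator_of_mem (Set.mem_Icc.2 ⟨hge, hle2⟩) _
    have hd2 : |deriv χ (β*r)| ≤ 2 := hχ' _
    have hd2' : |deriv χ (β*r)| * β * r ^ (β - (n:ℝ)) ≤ 2 * β * r ^ (β - (n:ℝ)) :=
      mul_le_mul_of_nonneg_right (mul_le_mul_of_nonneg_right hd2 hβ0.le) (hrpow_pos _).le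
    unfold Gfun
    rw [hG1, hG2]
    linarith [hrpow_pos (β-(n:ℝ)-1)]
  · have hderiv0 : deriv χ (β*r) = 0 := by
      have h2r : 2 < β * r := by
        rw [div_lt_iff₀ hβ0] at hgt2; linarith [hgt2]
      exact deriv_chi_zero χ hχ0 h2r
    have hG2 : (0:ℝ) ≤ Set.indicator (Set.Icc (1/β) (2/β)) (fun r => 2*β * r ^ (β - (n:ℝ))) r := by
      apply Set.indicator_nonneg
      intro y hy
      have hy0 : 0 ≤ y := le_trans (by positivity) hy.1
      positivity
    unfold Gfun
    rw [hG1]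
    rw [hderiv0] at hΦ'bound
    simp only [abs_zero, zero_mul] at hΦ'bound
    linarith [hrpow_pos (β-(n:ℝ)-1)]
lemma G1_integrable (n : ℕ) (hn : 1 ≤ n) {β : ℝ} (hβ0 : 0 < β) (hβ1 : β < 1) :
    Integrable (fun x : EuclideanSpace ℝ (Fin n) =>
      Set.indicator (Set.Ici (1/β)) (fun r => ((n:ℝ)+2) * r ^ (β - (n:ℝ) - 1)) ‖x‖) := by
  set p : ℝ := (n:ℝ) + 1 - β with hp
  have hn1 : (1:ℝ) ≤ (n:ℝ) := by exact_mod_cast hn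
  have hp0 : 0 < p := by rw [hp]; linarith
  have hbase : Integrable
      (fun x : EuclideanSpace ℝ (Fin n) => (1 + ‖x‖) ^ (-p)) volume := by
    apply integrable_one_add_norm
    rw [finrank_euclideanSpace_fin, hp]
    linarith
  have hm : Measurable (fun x : EuclideanSpace ℝ (Fin n) =>
      Set.indicator (Set.Ici (1/β)) (fun r => ((n:ℝ)+2) * r ^ (β - (n:ℝ) - 1)) ‖x‖) :=
by measurability
  refine (hbase.const_mul (((n:ℝ)+2) * 2 ^ p)).mono' hm.aestronglyMeasurable
    (Filter.Eventually.of_forall fun x => ?_)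
  by_cases hx : ‖x‖ ∈ Set.Ici (1/β)
  · rw [Set.indicator_of_mem hx]
    set r : ℝ := ‖x‖ with hrdef
    have hr1 : (1:ℝ) ≤ r := le_trans (one_le_one_div hβ0 hβ1.le) hx
    have hr0 : (0:ℝ) < r := by linarith
    have hexp : β - (n:ℝ) - 1 = -p := by rw [hp]; ring
    have key : r ^ (-p) ≤ 2 ^ p * (1+r) ^ (-p) := by
      have h2r : 1 + r ≤ 2*r := by linarith
      have hA : (1+r) ^ p ≤ (2*r) ^ p := Real.rpow_le_rpow (by positivity) h2r hp0.le
      rw [Real.mul_rpow (by norm_num) hr0.le] at hA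
      have h1 : (0:ℝ) < (1+r) ^ p := Real.rpow_pos_of_pos (by positivity) _
      have h2 : (0:ℝ) < r ^ p := Real.rpow_pos_of_pos hr0 _
      rw [Real.rpow_neg hr0.le, Real.rpow_neg (by positivity : (0:ℝ) ≤ 1+r),
        inv_eq_one_div, ← div_eq_mul_inv, div_le_div_iff₀ h2 h1, one_mul]
      exact hA
    have hnn : (0:ℝ) ≤ ((n:ℝ)+2) * r ^ (β - (n:ℝ) - 1) := by positivity
    rw [Real.norm_eq_abs, abs_of_nonneg hnn, hexp]
    calc ((n:ℝ)+2) * r ^ (-p) ≤ ((n:ℝ)+2) * (2^p * (1+r)^(-p)) := by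
          exact mul_le_mul_of_nonneg_left key (by positivity)
      _ = ((n:ℝ)+2) * 2^p * (1+r)^(-p) := by ring
  · rw [Set.indicator_of_notMem hx]
    simp only [norm_zero]
    positivity

lemma G2_integrable (n : ℕ) (hn : 1 ≤ n) {β : ℝ} (hβ0 : 0 < β) (hβ1 : β < 1) :
    Integrable (fun x : EuclideanSpace ℝ (Fin n) =>
      Set.indicator (Set.Icc (1/β) (2/β)) (fun r => 2*β * r ^ (β - (n:ℝ))) ‖x‖) := by
  have hn1 : (1:ℝ) ≤ (n:ℝ) := by exact_mod_cast hn
  set M : ℝ := 2*β * (1/β) ^ (β - (n:ℝ)) with hM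
  have hM0 : 0 ≤ M := by rw [hM]; positivity
  have hbase : Integrable ((Metric.closedBall (0:EuclideanSpace ℝ (Fin n)) (2/β)).indicator
      (fun _ => M)) volume := by
    rw [integrable_indicator_iff measurableSet_closedBall]
    exact integrableOn_const measure_closedBall_lt_top.ne
  have hm : Measurable (fun x : EuclideanSpace ℝ (Fin n) =>
      Set.indicator (Set.Icc (1/β) (2/β)) (fun r => 2*β * r ^ (β - (n:ℝ))) ‖x‖) :=
by measurability
  refine hbase.mono' hm.aestronglyMeasurable (Filter.Eventually.of_forall fun x => ?_)
  by_cases hx : ‖x‖ ∈ Set.Icc (1/β) (2/β)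
  · rw [Set.indicator_of_mem hx]
    have hball : x ∈ Metric.closedBall (0:EuclideanSpace ℝ (Fin n)) (2/β) := by
      rw [Metric.mem_closedBall, dist_zero_right]; exact hx.2
    rw [Set.indicator_of_mem hball]
    have h1β : (0:ℝ) < 1/β := by positivity
    have hrle : (1/β : ℝ) ≤ ‖x‖ := hx.1
    have hkey : ‖x‖ ^ (β - (n:ℝ)) ≤ (1/β) ^ (β - (n:ℝ)) :=
      Real.rpow_le_rpow_of_nonpos h1β hrle (by linarith)
    have hnn : (0:ℝ) ≤ 2*β * ‖x‖ ^ (β - (n:ℝ)) := by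
      have : (0:ℝ) < ‖x‖ := lt_of_lt_of_le h1β hrle
      positivity
    rw [Real.norm_eq_abs, abs_of_nonneg hnn, hM]
    exact mul_le_mul_of_nonneg_left hkey (by positivity)
  · rw [Set.indicator_of_notMem hx]
    simp only [norm_zero]
    exact Set.indicator_nonneg (fun _ _ => hM0) _

lemma radial1 (n : ℕ) (hn : 1 ≤ n) {β : ℝ} (hβ0 : 0 < β) (hβ1 : β < 1) :
    (∫ y in Set.Ioi (0:ℝ), y ^ (n-1) *
      Set.indicator (Set.Ici (1/β)) (fun r => ((n:ℝ)+2) * r ^ (β - (n:ℝ) - 1)) y)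
      = ((n:ℝ)+2) * (β ^ (1-β) / (1-β)) := by
  have c0 : (0:ℝ) < 1/β := by positivity
  have hrep : (fun y : ℝ => y ^ (n-1) *
      Set.indicator (Set.Ici (1/β)) (fun r => ((n:ℝ)+2) * r ^ (β-(n:ℝ)-1)) y)
      = Set.indicator (Set.Ici (1/β))
        (fun y => y ^ (n-1) * (((n:ℝ)+2) * y ^ (β-(n:ℝ)-1))) := by
    funext y
    by_cases h : y ∈ Set.Ici (1/β)
    · rw [Set.indicator_of_mem h, Set.indicator_of_mem h]
    · rw [Set.indicator_of_notMem h, Set.indicator_of_notMem h, mul_zero]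
  rw [hrep, integral_indicator measurableSet_Ici,
    Measure.restrict_restrict measurableSet_Ici]
  have hinter : Set.Ici (1/β) ∩ Set.Ioi 0 = Set.Ici (1/β) :=
    Set.inter_eq_left.2 (fun y hy => lt_of_lt_of_le c0 hy)
  rw [hinter, integral_Ici_eq_integral_Ioi]
  have hcongr : ∀ y ∈ Set.Ioi (1/β),
      y ^ (n-1) * (((n:ℝ)+2) * y ^ (β-(n:ℝ)-1)) = ((n:ℝ)+2) * y ^ (β-2) := by
    intro y hy
    have hy0 : (0:ℝ) < y := lt_trans c0 hy
    rw [← Real.rpow_natCast y (n-1), Nat.cast_sub hn, Nat.cast_one]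
    rw [show y ^ ((n:ℝ)-1) * (((n:ℝ)+2) * y ^ (β-(n:ℝ)-1))
      = ((n:ℝ)+2) * (y ^ ((n:ℝ)-1) * y ^ (β-(n:ℝ)-1)) from by ring,
      ← Real.rpow_add hy0, show ((n:ℝ)-1) + (β-(n:ℝ)-1) = β-2 from by ring]
  rw [setIntegral_congr_fun measurableSet_Ioi hcongr, integral_const_mul,
    integral_Ioi_rpow_of_lt (by linarith) c0]
  have h1 : ((1:ℝ)/β) ^ (β-2+1) = β ^ (1-β) := by
    rw [show β-2+1 = β-1 from by ring, one_div, Real.inv_rpow hβ0.le,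
      ← Real.rpow_neg hβ0.le, show -(β-1) = 1-β from by ring]
  rw [h1, show β-2+1 = -(1-β) from by ring, neg_div_neg_eq]

lemma radial2 (n : ℕ) (hn : 1 ≤ n) {β : ℝ} (hβ0 : 0 < β) (hβ1 : β < 1) :
    (∫ y in Set.Ioi (0:ℝ), y ^ (n-1) *
      Set.indicator (Set.Icc (1/β) (2/β)) (fun r => 2*β * r ^ (β - (n:ℝ))) y)
      = 2 * ((2:ℝ)^β - 1) * β ^ (-β) := by
  have c0 : (0:ℝ) < 1/β := by positivity
  have hab : (1/β : ℝ) ≤ 2/β := by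
    gcongr; norm_num
  have hrep : (fun y : ℝ => y ^ (n-1) *
      Set.indicator (Set.Icc (1/β) (2/β)) (fun r => 2*β * r ^ (β-(n:ℝ))) y)
      = Set.indicator (Set.Icc (1/β) (2/β))
        (fun y => y ^ (n-1) * (2*β * y ^ (β-(n:ℝ)))) := by
    funext y
    by_cases h : y ∈ Set.Icc (1/β) (2/β)
    · rw [Set.indicator_of_mem h, Set.indicator_of_mem h]
    · rw [Set.indicator_of_notMem h, Set.indicator_of_notMem h, mul_zero]
  rw [hrep, integral_indicator measurableSet_Icc,
    Measure.restrict_restrict measurableSet_Icc]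
  have hinter : Set.Icc (1/β) (2/β) ∩ Set.Ioi 0 = Set.Icc (1/β) (2/β) :=
    Set.inter_eq_left.2 (fun y hy => lt_of_lt_of_le c0 hy.1)
  rw [hinter, integral_Icc_eq_integral_Ioc]
  have hcongr : ∀ y ∈ Set.Ioc (1/β) (2/β),
      y ^ (n-1) * (2*β * y ^ (β-(n:ℝ))) = 2*β * y ^ (β-1) := by
    intro y hy
    have hy0 : (0:ℝ) < y := lt_trans c0 hy.1
    rw [← Real.rpow_natCast y (n-1), Nat.cast_sub hn, Nat.cast_one]
    rw [show y ^ ((n:ℝ)-1) * (2*β * y ^ (β-(n:ℝ)))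
      = 2*β * (y ^ ((n:ℝ)-1) * y ^ (β-(n:ℝ))) from by ring,
      ← Real.rpow_add hy0, show ((n:ℝ)-1) + (β-(n:ℝ)) = β-1 from by ring]
  rw [setIntegral_congr_fun measurableSet_Ioc hcongr,
    ← intervalIntegral.integral_of_le hab, intervalIntegral.integral_const_mul,
    integral_rpow (Or.inl (by linarith : (-1:ℝ) < β-1))]
  have hb : ((2:ℝ)/β) ^ (β-1+1) = 2^β * β^(-β) := by
    rw [show β-1+1 = β from by ring, Real.div_rpow (by norm_num) hβ0.le,
      Real.rpow_neg hβ0.le, div_eq_mul_inv]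
  have ha : ((1:ℝ)/β) ^ (β-1+1) = β^(-β) := by
    rw [show β-1+1 = β from by ring, one_div, Real.inv_rpow hβ0.le, ← Real.rpow_neg hβ0.le]
  rw [hb, ha, show β-1+1 = β from by ring]
  field_simp

end Statement10Aux

open Statement10Aux Set

/-- `L¹` bound for the partial derivatives `∂ᵢK₂`, with constant independent of `β ∈ (0,1)`. -/
theorem statement10 (n : ℕ) (hn : 1 ≤ n) (χ : ℝ → ℝ) (hχsmooth : ContDiff ℝ (⊤ : ℕ∞) χ)
    (hχrange : ∀ s, χ s ∈ Set.Icc (0:ℝ) 1)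
    (hχ1 : ∀ s : ℝ, |s| ≤ 1 → χ s = 1) (hχ0 : ∀ s : ℝ, 2 ≤ |s| → χ s = 0)
    (hχ' : ∀ s : ℝ, |deriv χ s| ≤ 2) :
    ∃ C : ℝ, 0 < C ∧ ∀ β : ℝ, 0 < β → β < 1 → ∀ i : Fin n,
      Integrable (fun x => fderiv ℝ (K2 n χ β) x (EuclideanSpace.single i 1)) volume ∧
      (∫ x, ‖fderiv ℝ (K2 n χ β) x (EuclideanSpace.single i 1)‖) ≤
        C * (β ^ (1 - β) / (1 - β) + ((2:ℝ) ^ β - 1) * β ^ (-β) / β) := by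
  classical
  set V : ℝ := (volume (Metric.ball (0:EuclideanSpace ℝ (Fin n)) 1)).toReal with hV
  have hV0 : 0 ≤ V := ENNReal.toReal_nonneg
  have hn1 : (1:ℝ) ≤ (n:ℝ) := by exact_mod_cast hn
  refine ⟨(n:ℝ) * V * ((n:ℝ)+2) + 2 * ((n:ℝ) * V) + 1, by positivity, ?_⟩
  intro β hβ0 hβ1 i
  set T1 : ℝ := β ^ (1-β) / (1-β) with hT1def
  set T2 : ℝ := ((2:ℝ)^β - 1) * β ^ (-β) / β with hT2def
  have hT1 : 0 ≤ T1 := div_nonneg (Real.rpow_nonneg hβ0.le _) (by linarith)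
  have h2β : (1:ℝ) ≤ 2^β := by
    calc (1:ℝ) = 2^(0:ℝ) := (Real.rpow_zero 2).symm
      _ ≤ 2^β := Real.rpow_le_rpow_of_exponent_le one_le_two hβ0.le
  have hT2 : 0 ≤ T2 :=
    div_nonneg (mul_nonneg (by linarith) (Real.rpow_nonneg hβ0.le _)) hβ0.le
  -- pointwise bound
  have hpt : ∀ x : EuclideanSpace ℝ (Fin n),
      ‖fderiv ℝ (K2 n χ β) x (EuclideanSpace.single i 1)‖ ≤ Gfun n β ‖x‖ := by
    intro x
    rcases lt_or_ge ‖x‖ (1/β) with hlt | hge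
    · rw [aux_fderiv_small n χ β hχ1 hβ0 hlt]
      simp only [ContinuousLinearMap.zero_apply, norm_zero]
      exact Gfun_nonneg n hβ0 _
    · exact aux_pointwise_large n χ β hχrange hχ0 hχ' hβ0 hβ1 hχsmooth i x hge
  -- integrability
  have hG1 := G1_integrable n hn hβ0 hβ1
  have hG2 := G2_integrable n hn hβ0 hβ1
  have hGint : Integrable (fun x : EuclideanSpace ℝ (Fin n) => Gfun n β ‖x‖) volume := by
    have := hG1.add hG2
    exact this
  have hmeas : AEStronglyMeasurable (fun x : EuclideanSpace ℝ (Fin n) =>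
      fderiv ℝ (K2 n χ β) x (EuclideanSpace.single i 1)) volume :=
    (measurable_fderiv_apply_const ℝ (K2 n χ β) _).aestronglyMeasurable
  have hInt : Integrable
      (fun x => fderiv ℝ (K2 n χ β) x (EuclideanSpace.single i 1)) volume :=
    hGint.mono' hmeas (Filter.Eventually.of_forall hpt)
  refine ⟨hInt, ?_⟩
  have hle1 : (∫ x, ‖fderiv ℝ (K2 n χ β) x (EuclideanSpace.single i 1)‖)
      ≤ ∫ x, Gfun n β ‖x‖ := integral_mono hInt.norm hGint hpt
  -- polar coordinates
  haveI : Nontrivial (EuclideanSpace ℝ (Fin n)) := by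
    apply Module.nontrivial_of_finrank_pos (R := ℝ)
    rw [finrank_euclideanSpace_fin]
    omega
  have hpolar := integral_fun_norm_addHaar
    (volume : Measure (EuclideanSpace ℝ (Fin n))) (Gfun n β)
  rw [finrank_euclideanSpace_fin] at hpolar
  -- split the radial integral
  have c0 : (0:ℝ) < 1/β := by positivity
  have hIA : IntegrableOn (fun y : ℝ => y ^ (n-1) *
      Set.indicator (Set.Ici (1/β)) (fun r => ((n:ℝ)+2) * r ^ (β-(n:ℝ)-1)) y)
      (Set.Ioi 0) volume := by
    have hrep : (fun y : ℝ => y ^ (n-1) *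
        Set.indicator (Set.Ici (1/β)) (fun r => ((n:ℝ)+2) * r ^ (β-(n:ℝ)-1)) y)
        = Set.indicator (Set.Ici (1/β))
          (fun y => y ^ (n-1) * (((n:ℝ)+2) * y ^ (β-(n:ℝ)-1))) := by
      funext y
      by_cases h : y ∈ Set.Ici (1/β)
      · rw [Set.indicator_of_mem h, Set.indicator_of_mem h]
      · rw [Set.indicator_of_notMem h, Set.indicator_of_notMem h, mul_zero]
    rw [hrep]
    apply Integrable.integrableOn
    rw [integrable_indicator_iff measurableSet_Ici]
    have hbase : IntegrableOn (fun y : ℝ => ((n:ℝ)+2) * y ^ (β-2)) (Set.Ici (1/β)) volume :=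
      (integrableOn_Ici_iff_integrableOn_Ioi (by finiteness)).2
        ((integrableOn_Ioi_rpow_of_lt (by linarith) c0).const_mul _)
    have heqon : Set.EqOn (fun y : ℝ => ((n:ℝ)+2) * y ^ (β-2))
        (fun y : ℝ => y ^ (n-1) * (((n:ℝ)+2) * y ^ (β-(n:ℝ)-1))) (Set.Ici (1/β)) := by
      intro y hy
      have hy0 : (0:ℝ) < y := lt_of_lt_of_le c0 hy
      show ((n:ℝ)+2) * y ^ (β-2) = y ^ (n-1) * (((n:ℝ)+2) * y ^ (β-(n:ℝ)-1))
      rw [← Real.rpow_natCast y (n-1), Nat.cast_sub hn, Nat.cast_one]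
      rw [show ((n:ℝ)+2) * y ^ (β-2)
        = ((n:ℝ)+2) * (y ^ ((n:ℝ)-1) * y ^ (β-(n:ℝ)-1)) from by
          rw [← Real.rpow_add hy0, show ((n:ℝ)-1) + (β-(n:ℝ)-1) = β-2 from by ring]]
      ring
    exact hbase.congr_fun heqon measurableSet_Ici
  have hIB : IntegrableOn (fun y : ℝ => y ^ (n-1) *
      Set.indicator (Set.Icc (1/β) (2/β)) (fun r => 2*β * r ^ (β-(n:ℝ))) y)
      (Set.Ioi 0) volume := by
    have hrep : (fun y : ℝ => y ^ (n-1) *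
        Set.indicator (Set.Icc (1/β) (2/β)) (fun r => 2*β * r ^ (β-(n:ℝ))) y)
        = Set.indicator (Set.Icc (1/β) (2/β))
          (fun y => y ^ (n-1) * (2*β * y ^ (β-(n:ℝ)))) := by
      funext y
      by_cases h : y ∈ Set.Icc (1/β) (2/β)
      · rw [Set.indicator_of_mem h, Set.indicator_of_mem h]
      · rw [Set.indicator_of_notMem h, Set.indicator_of_notMem h, mul_zero]
    rw [hrep]
    apply Integrable.integrableOn
    rw [integrable_indicator_iff measurableSet_Icc]
    apply ContinuousOn.integrableOn_Icc
    apply ContinuousOn.mul (continuous_pow (n-1)).continuousOn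
    apply ContinuousOn.mul continuousOn_const
    apply ContinuousOn.rpow_const continuousOn_id
    intro y hy
    exact Or.inl (ne_of_gt (lt_of_lt_of_le c0 hy.1))
  have hsplit : (∫ y in Set.Ioi (0:ℝ), y ^ (n-1) • Gfun n β y)
      = ((n:ℝ)+2) * T1 + 2 * ((2:ℝ)^β - 1) * β^(-β) := by
    have heq : (fun y : ℝ => y ^ (n-1) • Gfun n β y)
        = fun y => (y ^ (n-1) *
            Set.indicator (Set.Ici (1/β)) (fun r => ((n:ℝ)+2) * r ^ (β-(n:ℝ)-1)) y)
          + (y ^ (n-1) *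
            Set.indicator (Set.Icc (1/β) (2/β)) (fun r => 2*β * r ^ (β-(n:ℝ))) y) := by
      funext y
      rw [smul_eq_mul]
      unfold Gfun
      ring
    rw [heq, integral_add hIA hIB, radial1 n hn hβ0 hβ1, radial2 n hn hβ0 hβ1]
  rw [hsplit] at hpolar
  rw [nsmul_eq_mul, smul_eq_mul, measureReal_def, ← hV] at hpolar
  have hkey : (2:ℝ) * ((2:ℝ)^β - 1) * β^(-β) = 2 * β * T2 := by
    rw [hT2def]
    field_simp
  calc (∫ x, ‖fderiv ℝ (K2 n χ β) x (EuclideanSpace.single i 1)‖)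
      ≤ ∫ x, Gfun n β ‖x‖ := hle1
    _ = (n:ℝ) * (V * (((n:ℝ)+2) * T1 + 2 * ((2:ℝ)^β - 1) * β^(-β))) := hpolar
    _ ≤ ((n:ℝ) * V * ((n:ℝ)+2) + 2 * ((n:ℝ) * V) + 1) * (T1 + T2) := by
      rw [hkey]
      have hβT2 : (2:ℝ) * β * T2 ≤ 2 * T2 := by nlinarith
      nlinarith [mul_nonneg (mul_nonneg (Nat.cast_nonneg (α := ℝ) n) hV0) hT1,
        mul_nonneg (mul_nonneg (Nat.cast_nonneg (α := ℝ) n) hV0) hT2,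
        mul_nonneg (Nat.cast_nonneg (α := ℝ) n) hV0]

end
end
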